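/- For every computably bounded numbering φ, the halting set K is Turing reducible to MIN_φ. -/

import Mathlib

/-- A numbering: a family of partial functions `φ_e : ℕ →. ℕ` such that the
two-variable map `(e, x) ↦ φ_e x` is partial recursive. -/
def NumberingFam (φ : ℕ → ℕ →. ℕ) : Prop := Partrec₂ φ

/-- `φ` is acceptable: every numbering translates into it via a computable function. -/
def Acceptable (φ : ℕ → ℕ →. ℕ) : Prop :=
  ∀ ψ : ℕ → ℕ →. ℕ, NumberingFam ψ → ∃ f : ℕ → ℕ, Computable f ∧ ∀ e, φ (f e) = ψ e

/-- `φ` has the Kolmogorov property: every numbering translates into it with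
linearly bounded (not necessarily computable) translation. -/
def KolmogorovProperty (φ : ℕ → ℕ →. ℕ) : Prop :=
  ∀ ψ : ℕ → ℕ →. ℕ, NumberingFam ψ → ∃ c : ℕ, ∀ e, ∃ j, j ≤ c * e + c ∧ φ j = ψ e

/-- `φ` is computably bounded: every numbering translates into it with a
computable bound on the translated index. -/
def ComputablyBounded (φ : ℕ → ℕ →. ℕ) : Prop :=
  ∀ ψ : ℕ → ℕ →. ℕ, NumberingFam ψ → ∃ f : ℕ → ℕ, Computable f ∧ ∀ e, ∃ j, j ≤ f e ∧ φ j = ψ e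

/-- `φ` is polynomially bounded with degree `p`. -/
def PolyBounded (φ : ℕ → ℕ →. ℕ) (p : ℕ) : Prop :=
  ∀ ψ : ℕ → ℕ →. ℕ, NumberingFam ψ → ∃ c : ℕ, ∀ e, ∃ j, j ≤ c * e ^ p + c ∧ φ j = ψ e

/-- The set of `φ`-minimal indices. -/
def MINset (φ : ℕ → ℕ →. ℕ) : Set ℕ := {e | ∀ j < e, φ j ≠ φ e}

/-- Minimal indices of functions converging exactly on input 0. -/
def Mset (φ : ℕ → ℕ →. ℕ) : Set ℕ :=
  {e | e ∈ MINset φ ∧ (φ e 0).Dom ∧ ∀ x ≥ 1, ¬ (φ e x).Dom}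

/-- `minIndex φ e` is the minimal index computing the same function as `e`. -/
noncomputable def minIndex (φ : ℕ → ℕ →. ℕ) (e : ℕ) : ℕ := sInf {j | φ j = φ e}

/-- A partial recursive `U` is optimal: every partial recursive `V` is simulated
with only linear increase of programs. -/
def OptimalMachine (U : ℕ →. ℕ) : Prop :=
  Nat.Partrec U ∧ ∀ V : ℕ →. ℕ, Nat.Partrec V →
    ∃ c : ℕ, ∀ p, (V p).Dom → ∃ q, q ≤ c * p + c ∧ U q = V p

/-- Kolmogorov complexity of `x` with respect to `U`: the least binary length of
a `U`-program for `x`. (`Nat.size q` is the binary length of `q`.) -/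
noncomputable def Cpx (U : ℕ →. ℕ) (x : ℕ) : ℕ :=
  sInf {n | ∃ q, U q = Part.some x ∧ Nat.size q = n}

/-- Kolmogorov complexity of (the canonical code of) a finite set. -/
noncomputable def CpxFinset (U : ℕ →. ℕ) (A : Finset ℕ) : ℕ :=
  Cpx U (Encodable.encode A)

/-- `A` is `(m,k)`-recursive: a computable labelling of `k`-tuples that is
correct in at least `m` coordinates on every tuple. -/
def MKRecursive (m k : ℕ) (A : Set ℕ) : Prop :=
  ∃ f : (Fin k → ℕ) → Fin k → Bool, Computable f ∧
    ∀ x : Fin k → ℕ, m ≤ {i : Fin k | (f x i = true ↔ x i ∈ A)}.ncard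

/-- Partial recursive relative to an oracle `O : ℕ →. ℕ` (mirrors `Nat.Partrec`
with an extra base case for the oracle). -/
inductive RecursiveInOracle (O : ℕ →. ℕ) : (ℕ →. ℕ) → Prop
  | zero : RecursiveInOracle O (pure 0)
  | succ : RecursiveInOracle O ↑Nat.succ
  | left : RecursiveInOracle O ↑fun n : ℕ => n.unpair.1
  | right : RecursiveInOracle O ↑fun n : ℕ => n.unpair.2
  | oracle : RecursiveInOracle O O
  | pair {f g} : RecursiveInOracle O f → RecursiveInOracle O g →
      RecursiveInOracle O fun n => Nat.pair <$> f n <*> g n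
  | comp {f g} : RecursiveInOracle O f → RecursiveInOracle O g →
      RecursiveInOracle O fun n => g n >>= f
  | prec {f g} : RecursiveInOracle O f → RecursiveInOracle O g →
      RecursiveInOracle O (Nat.unpaired fun a n =>
        n.rec (f a) fun y IH => do let i ← IH; g (Nat.pair a (Nat.pair y i)))
  | rfind {f} : RecursiveInOracle O f →
      RecursiveInOracle O fun a => Nat.rfind fun n => (fun m => m = 0) <$> f (Nat.pair a n)

/-- The characteristic function of a set of naturals, as a partial function. -/
noncomputable def chi (A : Set ℕ) : ℕ →. ℕ :=
  fun n => Part.some (A.indicator (fun _ => 1) n)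

/-- Turing reducibility between sets of naturals: the characteristic function
of `A` is partial recursive relative to the characteristic function of `B`. -/
noncomputable def TuringLE (A B : Set ℕ) : Prop := RecursiveInOracle (chi B) (chi A)

/-- The standard acceptable numbering of the partial recursive functions,
via Gödel codes. -/
def stdNumbering (e : ℕ) : ℕ →. ℕ := (Denumerable.ofNat Nat.Partrec.Code e).eval

/-- The halting set. -/
def haltingSet : Set ℕ := {e | (stdNumbering e e).Dom}

/-!
Let `ψ_e` be the constant function whose value is the halting time of `e` (undefined when `e`
diverges), and let `u` be computable with `ψ_e = φ_j` for some `j ≤ u e`. With the membership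
bits of `MIN_φ` below `u e + 1` in hand, run every flagged index except the minimal index `j0`
of the empty function until each has converged on some input: this stage exists, since every
other minimal index computes a nonempty function. If `e` halts, the minimal index of `ψ_e` is
among those runs, so the halting time of `e` is one of the observed values; conversely an
observed value within which `e` halts witnesses that `e` halts.
-/

open Encodable Denumerable
open Nat.Partrec (Code)
open Nat.Partrec.Code

namespace RecursiveInOracle

variable {O f g : ℕ →. ℕ}

theorem of_eq (hf : RecursiveInOracle O f) (H : ∀ n, f n = g n) : RecursiveInOracle O g :=
  funext H ▸ hf

theorem of_partrec (hf : Partrec f) : RecursiveInOracle O f := by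
  replace hf := Partrec.nat_iff.1 hf
  induction hf with
  | zero => exact .zero
  | succ => exact .succ
  | left => exact .left
  | right => exact .right
  | pair _ _ ihf ihg => exact .pair ihf ihg
  | comp _ _ ihf ihg => exact .comp ihf ihg
  | prec _ _ ihf ihg => exact .prec ihf ihg
  | rfind _ ihf => exact .rfind ihf

theorem of_computable {h : ℕ → ℕ} (hh : Computable h) :
    RecursiveInOracle O fun n => Part.some (h n) :=
  of_partrec hh.partrec

end RecursiveInOracle

theorem recursiveInOracle_encode_map_range (g : ℕ → ℕ) :
    RecursiveInOracle (fun n => Part.some (g n))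
      fun n => Part.some (encode ((List.range n).map g)) := by
  set O : ℕ →. ℕ := fun n => Part.some (g n)
  have hsnoc : Computable fun m : ℕ => encode (ofNat (List ℕ) m.unpair.2 ++ [m.unpair.1]) :=
    (Primrec.encode.comp (Primrec.list_concat.comp
      ((Primrec.ofNat _).comp (Primrec.snd.comp Primrec.unpair))
      (Primrec.fst.comp Primrec.unpair))).to_comp
  have hstep := RecursiveInOracle.comp (.of_computable hsnoc)
    (RecursiveInOracle.pair (.comp (.oracle (O := O))
      (.of_computable (h := fun z => z.unpair.2.unpair.1)
        (Primrec.fst.comp (Primrec.unpair.comp (Primrec.snd.comp Primrec.unpair))).to_comp))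
      (.of_computable (h := fun z => z.unpair.2.unpair.2)
        (Primrec.snd.comp (Primrec.unpair.comp (Primrec.snd.comp Primrec.unpair))).to_comp))
  refine (RecursiveInOracle.comp (.prec .zero hstep) (.of_computable (h := Nat.pair 0)
    (Primrec₂.natPair.comp (Primrec.const 0) Primrec.id).to_comp)).of_eq fun n => ?_
  simp only [O, Nat.unpaired, Nat.unpair_pair, Part.bind_eq_bind, Part.bind_some, Seq.seq,
    Part.map_eq_map, Part.map_some]
  induction n with
  | zero => rfl
  | succ n ih => simp [ih, List.range_succ]

theorem turingLE_of_partrec_of_prefix {A B : Set ℕ} {D : ℕ → List ℕ →. ℕ} (hD : Partrec₂ D)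
    {u : ℕ → ℕ} (hu : Computable u)
    (hAB : ∀ n, D n ((List.range (u n)).map (B.indicator fun _ => 1)) = chi A n) :
    TuringLE A B := by
  have hprefix := RecursiveInOracle.comp
    (recursiveInOracle_encode_map_range (B.indicator fun _ => 1)) (.of_computable hu)
  have hinput := RecursiveInOracle.pair (.of_computable Computable.id) hprefix
  have hD' : Partrec fun m : ℕ => D m.unpair.1 (ofNat (List ℕ) m.unpair.2) :=
    hD.comp (Computable.fst.comp Computable.unpair)
      ((Computable.ofNat _).comp (Computable.snd.comp Computable.unpair))
  refine (RecursiveInOracle.comp (.of_partrec hD') hinput).of_eq fun n => ?_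
  simpa [Seq.seq] using hAB n

theorem PrimrecRel.exists_lt' {β : Type*} [Primcodable β] {R : ℕ → β → Prop}
    (hR : PrimrecRel R) : PrimrecRel fun n b => ∃ x < n, R x b :=
  (hR.exists_mem_list.comp (Primrec.list_range.comp Primrec.fst) Primrec.snd).of_eq
    fun _ => by simp

theorem PrimrecRel.forall_lt' {β : Type*} [Primcodable β] {R : ℕ → β → Prop}
    (hR : PrimrecRel R) : PrimrecRel fun n b => ∀ x < n, R x b :=
  (hR.forall_mem_list.comp (Primrec.list_range.comp Primrec.fst) Primrec.snd).of_eq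
    fun _ => by simp

theorem NumberingFam.exists_code {φ : ℕ → ℕ →. ℕ} (hφ : NumberingFam φ) :
    ∃ c : Code, ∀ j x, eval c (Nat.pair j x) = φ j x := by
  obtain ⟨c, hc⟩ := Nat.Partrec.Code.exists_code.1
    (Partrec.nat_iff.1 (Partrec.comp hφ Computable.unpair :
      Partrec fun n : ℕ => φ n.unpair.1 n.unpair.2))
  exact ⟨c, fun j x => by simp [hc]⟩

section MINset

variable {φ : ℕ → ℕ →. ℕ}

theorem eq_of_mem_MINset {j k : ℕ} (hj : j ∈ MINset φ) (hk : k ∈ MINset φ) (h : φ j = φ k) :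
    j = k := by
  rcases lt_trichotomy j k with hlt | heq | hgt
  · exact absurd h (hk j hlt)
  · exact heq
  · exact absurd h.symm (hj k hgt)

theorem exists_mem_MINset_le_of_eq {j : ℕ} {g : ℕ →. ℕ} (h : φ j = g) :
    ∃ m ≤ j, m ∈ MINset φ ∧ φ m = g := by
  classical
  have hex : ∃ m, φ m = g := ⟨j, h⟩
  refine ⟨Nat.find hex, Nat.find_min' hex h, fun i hi hieq => ?_, Nat.find_spec hex⟩
  exact Nat.find_min hex hi (hieq.trans (Nat.find_spec hex))

theorem ne_iff_exists_dom_of_mem_MINset {j0 j : ℕ} (hj0 : j0 ∈ MINset φ)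
    (hj0_empty : φ j0 = fun _ => Part.none) (hj : j ∈ MINset φ) :
    j ≠ j0 ↔ ∃ x, (φ j x).Dom := by
  refine ⟨fun hne => ?_, fun ⟨x, hx⟩ hj_eq => ?_⟩
  · by_contra! hnone
    exact hne (eq_of_mem_MINset hj hj0
      (hj0_empty ▸ funext fun x => Part.eq_none_iff'.2 (hnone x)))
  · subst hj_eq
    rw [hj0_empty] at hx
    exact hx

end MINset

section Stages

variable (c : Code)

def ConvergedBy (t j : ℕ) : Prop := ∃ x < t, (evaln t c (Nat.pair j x)).isSome

def FlaggedConvergedBy (j0 : ℕ) (l : List ℕ) (t : ℕ) : Prop :=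
  ∀ j < l.length, l.getD j 0 = 1 ∧ j ≠ j0 → ConvergedBy c t j

theorem primrecRel_convergedBy : PrimrecRel (ConvergedBy c) := by
  have hstep : PrimrecRel fun (x : ℕ) (p : ℕ × ℕ) => (evaln p.1 c (Nat.pair p.2 x)).isSome :=
    Primrec₂.primrecRel ((Primrec.option_isSome.comp (primrec_evaln.comp
      (((Primrec.fst.comp Primrec.snd).pair (Primrec.const c)).pair
        (Primrec₂.natPair.comp (Primrec.snd.comp Primrec.snd) Primrec.fst)))).to₂.of_eq
      fun _ _ => by simp)
  exact (hstep.exists_lt'.comp Primrec.fst Primrec.id).of_eq fun _ => Iff.rfl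

theorem primrecRel_flaggedConvergedBy (j0 : ℕ) : PrimrecRel (FlaggedConvergedBy c j0) := by
  have hflag : PrimrecRel fun (j : ℕ) (p : List ℕ × ℕ) => p.1.getD j 0 = 1 ∧ j ≠ j0 :=
    PrimrecPred.and
      (Primrec.eq.comp ((Primrec.list_getD 0).comp (Primrec.fst.comp Primrec.snd) Primrec.fst)
        (Primrec.const 1))
      (Primrec.eq.comp Primrec.fst (Primrec.const j0)).not
  have hstep : PrimrecRel fun (j : ℕ) (p : List ℕ × ℕ) =>
      p.1.getD j 0 = 1 ∧ j ≠ j0 → ConvergedBy c p.2 j :=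
    (hflag.not.or ((primrecRel_convergedBy c).comp (Primrec.snd.comp Primrec.snd)
      Primrec.fst)).of_eq fun _ => by tauto
  exact (hstep.forall_lt'.comp (Primrec.list_length.comp Primrec.fst) Primrec.id).of_eq
    fun _ => Iff.rfl

variable {c}

theorem ConvergedBy.mono {t t' j : ℕ} (h : t ≤ t') (hj : ConvergedBy c t j) :
    ConvergedBy c t' j := by
  obtain ⟨x, hx, hsome⟩ := hj
  obtain ⟨v, hv⟩ := Option.isSome_iff_exists.1 hsome
  exact ⟨x, hx.trans_le h, Option.isSome_iff_exists.2 ⟨v, evaln_mono h hv⟩⟩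

theorem exists_convergedBy {j : ℕ} (h : ∃ x, (eval c (Nat.pair j x)).Dom) :
    ∃ t, ConvergedBy c t j := by
  obtain ⟨x, hx⟩ := h
  obtain ⟨k, hk⟩ := evaln_complete.1 (Part.get_mem hx)
  exact ⟨max k x + 1, x, by omega, Option.isSome_iff_exists.2 ⟨_, evaln_mono (by omega) hk⟩⟩

theorem exists_forall_convergedBy {N : ℕ} {P : ℕ → Prop}
    (h : ∀ j < N, P j → ∃ x, (eval c (Nat.pair j x)).Dom) :
    ∃ t, ∀ j < N, P j → ConvergedBy c t j := by
  have hev : ∀ j ∈ {j | j < N ∧ P j}, ∀ᶠ t in Filter.atTop, ConvergedBy c t j := by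
    rintro j ⟨hj, hPj⟩
    obtain ⟨t, ht⟩ := exists_convergedBy (h j hj hPj)
    exact Filter.eventually_atTop.2 ⟨t, fun t' ht' => ht.mono ht'⟩
  obtain ⟨t, ht⟩ :=
    (((Set.finite_lt_nat N).subset fun j hj => hj.1).eventually_all.2 hev).exists
  exact ⟨t, fun j hj hPj => ht j ⟨hj, hPj⟩⟩

end Stages

section Halting

def haltTime (e : ℕ) : Part ℕ :=
  Nat.rfind fun s => Part.some (evaln s (ofNat Code e) e).isSome

theorem haltTime_partrec : Partrec haltTime :=
  Partrec.rfind (Primrec.option_isSome.comp (primrec_evaln.comp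
    ((Primrec.snd.pair ((Primrec.ofNat Code).comp Primrec.fst)).pair Primrec.fst))).to_comp.partrec

theorem evaln_haltTime_isSome {e v : ℕ} (hv : v ∈ haltTime e) :
    (evaln v (ofNat Code e) e).isSome :=
  (Part.mem_some_iff.1 (Nat.rfind_spec hv)).symm

theorem mem_haltingSet_iff_haltTime_dom {e : ℕ} : e ∈ haltingSet ↔ (haltTime e).Dom := by
  refine ⟨fun h => ?_, fun h => ?_⟩
  · obtain ⟨k, hk⟩ := evaln_complete.1 (Part.get_mem h)
    exact Nat.rfind_dom.2 ⟨k, Part.mem_some_iff.2 (Option.isSome_iff_exists.2 ⟨_, hk⟩).symm,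
      fun _ => trivial⟩
  · obtain ⟨v, hv⟩ := Option.isSome_iff_exists.1 (evaln_haltTime_isSome (Part.get_mem h))
    exact Part.dom_iff_mem.2 ⟨v, evaln_sound hv⟩

def haltTimeNumbering : ℕ → ℕ →. ℕ := fun e _ => haltTime e

theorem numberingFam_haltTimeNumbering : NumberingFam haltTimeNumbering :=
  haltTime_partrec.comp Computable.fst

def ObservedHalt (c : Code) (N t e : ℕ) : Prop :=
  ∃ j < N, ∃ x < t, ((evaln t c (Nat.pair j x)).bind fun v => evaln v (ofNat Code e) e).isSome

theorem primrecPred_observedHalt (c : Code) :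
    PrimrecPred fun p : ℕ × ℕ × ℕ => ObservedHalt c p.1 p.2.1 p.2.2 := by
  have hrun : PrimrecRel fun (x : ℕ) (q : ℕ × ℕ × ℕ) =>
      ((evaln q.2.1 c (Nat.pair q.1 x)).bind fun v => evaln v (ofNat Code q.2.2) q.2.2).isSome := by
    refine Primrec₂.primrecRel ((Primrec.option_isSome.comp (Primrec.option_bind
      (primrec_evaln.comp (((Primrec.fst.comp (Primrec.snd.comp Primrec.snd)).pair
        (Primrec.const c)).pair (Primrec₂.natPair.comp (Primrec.fst.comp Primrec.snd)
          Primrec.fst)))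
      (primrec_evaln.comp ((Primrec.snd.pair ((Primrec.ofNat Code).comp
        (Primrec.snd.comp (Primrec.snd.comp (Primrec.snd.comp Primrec.fst))))).pair
        (Primrec.snd.comp (Primrec.snd.comp (Primrec.snd.comp Primrec.fst))))).to₂)).to₂.of_eq
      fun _ _ => by simp)
  have hinner : PrimrecRel fun (j : ℕ) (p : ℕ × ℕ) =>
      ∃ x < p.1, ((evaln p.1 c (Nat.pair j x)).bind fun v => evaln v (ofNat Code p.2) p.2).isSome :=
    (hrun.exists_lt'.comp (Primrec.fst.comp Primrec.snd) Primrec.id).of_eq fun _ => Iff.rfl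
  exact hinner.exists_lt'

theorem mem_haltingSet_of_observedHalt {c : Code} {N t e : ℕ} (h : ObservedHalt c N t e) :
    e ∈ haltingSet := by
  obtain ⟨j, -, x, -, hsome⟩ := h
  obtain ⟨w, hw⟩ := Option.isSome_iff_exists.1 hsome
  obtain ⟨v, -, hv⟩ := Option.bind_eq_some_iff.1 hw
  exact Part.dom_iff_mem.2 ⟨w, evaln_sound hv⟩

theorem observedHalt_of_convergedBy {φ : ℕ → ℕ →. ℕ} {c : Code}
    (hc : ∀ j x, eval c (Nat.pair j x) = φ j x) {e m N T : ℕ} (hm : φ m = haltTimeNumbering e)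
    (hmN : m < N) (hT : ConvergedBy c T m) : ObservedHalt c N T e := by
  obtain ⟨x, hxT, hsome⟩ := hT
  obtain ⟨v, hv⟩ := Option.isSome_iff_exists.1 hsome
  have hv_time : v ∈ haltTimeNumbering e x := by
    rw [← hm, ← hc]
    exact evaln_sound hv
  refine ⟨m, hmN, x, hxT, ?_⟩
  rw [hv]
  exact evaln_haltTime_isSome hv_time

end Halting

/-- Reads `l` as the membership bits of `MIN_φ` below `l.length`, with `c` computing
`⟨j, x⟩ ↦ φ_j x` and `j0` the minimal index of the empty function. -/
noncomputable def haltingDecider (c : Code) (j0 e : ℕ) (l : List ℕ) : Part ℕ :=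
  open Classical in
  (Nat.rfind fun t => Part.some (decide (FlaggedConvergedBy c j0 l t))).map
    fun t => if ObservedHalt c l.length t e then 1 else 0

theorem haltingDecider_partrec (c : Code) (j0 : ℕ) : Partrec₂ (haltingDecider c j0) := by
  classical
  have hsearch : Partrec fun p : ℕ × List ℕ =>
      Nat.rfind fun t => Part.some (decide (FlaggedConvergedBy c j0 p.2 t)) :=
    Partrec.rfind ((primrecRel_flaggedConvergedBy c j0).decide.comp
      (Primrec.snd.comp Primrec.fst) Primrec.snd).to_comp.partrec
  have hout : Computable₂ fun (p : ℕ × List ℕ) (t : ℕ) =>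
      if ObservedHalt c p.2.length t p.1 then 1 else 0 :=
    (Primrec.ite ((primrecPred_observedHalt c).comp ((Primrec.list_length.comp
      (Primrec.snd.comp Primrec.fst)).pair (Primrec.snd.pair (Primrec.fst.comp Primrec.fst))))
      (Primrec.const 1) (Primrec.const 0)).to_comp.to₂
  exact hsearch.map hout

theorem haltingDecider_eq {φ : ℕ → ℕ →. ℕ} {c : Code} (hc : ∀ j x, eval c (Nat.pair j x) = φ j x)
    {j0 : ℕ} (hj0 : j0 ∈ MINset φ) (hj0_empty : φ j0 = fun _ => Part.none)
    {e N : ℕ} (hN : ∃ j < N, φ j = haltTimeNumbering e) :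
    haltingDecider c j0 e ((List.range N).map ((MINset φ).indicator fun _ => 1)) =
      chi haltingSet e := by
  classical
  set l := (List.range N).map ((MINset φ).indicator fun _ => 1)
  have hlen : l.length = N := by simp [l]
  have hflag : ∀ j < N, l.getD j 0 = 1 ↔ j ∈ MINset φ := fun j hj => by
    by_cases hjm : j ∈ MINset φ <;> simp [l, hj, hjm]
  obtain ⟨t, ht⟩ : ∃ t, FlaggedConvergedBy c j0 l t :=
    exists_forall_convergedBy fun j hj ⟨hj1, hjne⟩ => by
      simpa only [hc] using (ne_iff_exists_dom_of_mem_MINset hj0 hj0_empty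
        ((hflag j (hlen ▸ hj)).1 hj1)).1 hjne
  have hdom : (Nat.rfind fun t => Part.some (decide (FlaggedConvergedBy c j0 l t))).Dom :=
    Nat.rfind_dom.2 ⟨t, by simpa using ht, fun _ => trivial⟩
  have hT := Part.get_mem hdom
  set T := Part.get _ hdom
  have hT_flag : FlaggedConvergedBy c j0 l T := by simpa using Nat.rfind_spec hT
  have hobs : ObservedHalt c N T e ↔ e ∈ haltingSet := by
    refine ⟨mem_haltingSet_of_observedHalt, fun he => ?_⟩
    obtain ⟨j, hjN, hj⟩ := hN
    obtain ⟨m, hmj, hmMIN, hm⟩ := exists_mem_MINset_le_of_eq hj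
    have hmN : m < N := hmj.trans_lt hjN
    have hm_dom : ∃ x, (φ m x).Dom := ⟨0, hm ▸ mem_haltingSet_iff_haltTime_dom.1 he⟩
    have hm_ne := (ne_iff_exists_dom_of_mem_MINset hj0 hj0_empty hmMIN).2 hm_dom
    exact observedHalt_of_convergedBy hc hm hmN
      (hT_flag m (hlen.symm ▸ hmN) ⟨(hflag m hmN).2 hmMIN, hm_ne⟩)
  rw [haltingDecider, Part.eq_some_iff.2 (Part.mem_map _ hT), chi, hlen]
  by_cases he : e ∈ haltingSet <;> simp [hobs, he]

/-- For every computably bounded numbering, the halting set is Turing reducible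
to `MIN_φ`. -/
theorem halting_turing_reducible_to_MIN
    (φ : ℕ → ℕ →. ℕ) (hφ : NumberingFam φ) (hcb : ComputablyBounded φ) :
    TuringLE haltingSet (MINset φ) := by
  obtain ⟨c, hc⟩ := hφ.exists_code
  obtain ⟨_, -, hempty⟩ := hcb (fun _ _ => Part.none) Partrec.none
  obtain ⟨j, -, hj⟩ := hempty 0
  obtain ⟨j0, -, hj0, hj0_empty⟩ := exists_mem_MINset_le_of_eq hj
  obtain ⟨u, hu, hu_bound⟩ := hcb _ numberingFam_haltTimeNumbering
  refine turingLE_of_partrec_of_prefix (haltingDecider_partrec c j0) (Computable.succ.comp hu)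
    fun e => haltingDecider_eq hc hj0 hj0_empty ?_
  obtain ⟨k, hk, hk_eq⟩ := hu_bound e
  exact ⟨k, Nat.lt_succ_of_le hk, hk_eq⟩
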